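/- Let G be a graph, K = {v₁,…,v_q} a clique in G, and P a path on 7 vertices u₀,…,u₆ in G − K (a path of length six) such that every uᵢ has exactly two neighbors outside K (its path neighbors, with the endpoints having one path-neighbor each — more precisely, every vertex of P has degree two in G − K) and the neighborhood of each uᵢ inside K is a prefix {v₁,…,v_{q_i}} with q_i ≥ 1. Then G has a feedback vertex set of size at most k if and only if G − v₁ has a feedback vertex set of size at most k − 1; moreover G has a minimum feedback vertex set containing v₁. -/

import Mathlib

open SimpleGraph

/-- `X` is a feedback vertex set of `G`: deleting `X` leaves an acyclic graph. -/
def IsFVS {V : Type*} [Fintype V] (G : SimpleGraph V) (X : Finset V) : Prop :=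
  (G.induce ((↑X : Set V)ᶜ)).IsAcyclic

/-- `G` has a feedback vertex set of size at most `k`. -/
def HasFVS {V : Type*} [Fintype V] (G : SimpleGraph V) (k : ℕ) : Prop :=
  ∃ X : Finset V, X.card ≤ k ∧ IsFVS G X

/-- The graph `G - u`, obtained by deleting the vertex `u`. -/
def delVert {V : Type*} (G : SimpleGraph V) (u : V) : SimpleGraph {x : V // x ≠ u} :=
  G.comap Subtype.val

/-!
Let `v₀ = v 0` and let `Y` be a feedback vertex set with `v₀ ∉ Y`. Since `v₀` is adjacent to every
`u i`, the triangles `v₀ u₀ u₁` and `v₀ u₂ u₃` force `Y` to contain two vertices of the path `P`,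
while `Y` misses at most two vertices of the clique `K`. Hence `X = (Y \ P) ∪ (K \ Y)` is no larger
than `Y`, contains `v₀`, and is again a feedback vertex set: a cycle avoiding `X` that meets `P`
cannot leave `P`, because the neighbours of `P` outside `P` lie in `K ⊆ X`, and `P` induces a path;
a cycle avoiding both `X` and `P` avoids `Y`.
-/

open Finset

namespace SimpleGraph

variable {V W : Type*}

theorem isAcyclic_pathGraph (n : ℕ) : (pathGraph n).IsAcyclic := by
  refine isAcyclic_iff_forall_adj_isBridge.mpr fun a b hab ↦ ?_
  wlog hab' : a.val + 1 = b.val generalizing a b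
  · rw [Sym2.eq_swap]
    exact this b a hab.symm ((pathGraph_adj.mp hab).resolve_left hab')
  -- without the edge `ab`, no edge leaves `{x | x ≤ a}`
  have hleft : ∀ {x y} (p : ((pathGraph n).deleteEdges {s(a, b)}).Walk x y), x ≤ a → y ≤ a := by
    intro x y p
    induction p with
    | nil => exact id
    | cons hadj _ ih =>
      rw [deleteEdges_adj, pathGraph_adj, Set.mem_singleton_iff, Sym2.eq_iff] at hadj
      intro hx
      apply ih
      simp only [Fin.le_def, Fin.ext_iff] at *
      omega
  rw [isBridge_iff]
  rintro ⟨p⟩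
  have hba := Fin.le_def.mp (hleft p le_rfl)
  omega

theorem isAcyclic_induce_iff {G : SimpleGraph V} {s : Set V} :
    (G.induce s).IsAcyclic ↔ ∀ x (c : G.Walk x x), c.IsCycle → ∃ y ∈ c.support, y ∉ s := by
  refine ⟨fun hs x c hc ↦ ?_, fun h x c hc ↦ ?_⟩
  · by_contra! hcs
    refine hs (c.induce s hcs) (.of_map (f := (Embedding.induce (G := G) s).toHom) ?_)
    rwa [Walk.map_induce]
  · obtain ⟨y, hy, hys⟩ := h _ _
      (hc.map (f := (Embedding.induce (G := G) s).toHom) (Embedding.induce (G := G) s).injective)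
    obtain ⟨y', -, rfl⟩ := List.mem_map.mp (Walk.support_map _ _ ▸ hy)
    exact hys y'.2

theorem isAcyclic_induce_range_iff {G : SimpleGraph V} {f : W → V} (hf : Function.Injective f) :
    (G.induce (Set.range f)).IsAcyclic ↔ (G.comap f).IsAcyclic :=
  (Embedding.comap ⟨f, hf⟩ G).isoInduceRange.isAcyclic_iff.symm

theorem isAcyclic_induce_range_of_adj_consecutive {n : ℕ} {G : SimpleGraph V} {u : Fin n → V}
    (hu : Function.Injective u)
    (hadj : ∀ i j, G.Adj (u i) (u j) → (j : ℕ) = i + 1 ∨ (i : ℕ) = j + 1) :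
    (G.induce (Set.range u)).IsAcyclic :=
  (isAcyclic_induce_range_iff hu).mpr <|
    (isAcyclic_pathGraph n).anti fun i j hij ↦
      pathGraph_adj.mpr ((hadj i j hij).imp Eq.symm Eq.symm)

theorem Walk.forall_mem_support_of_adj_closed {G : SimpleGraph V} {s t : Set V}
    (hst : ∀ a b, G.Adj a b → a ∈ s → b ∈ t → b ∈ s) {x y : V} (p : G.Walk x y)
    (hpt : ∀ z ∈ p.support, z ∈ t) (hps : ∃ z ∈ p.support, z ∈ s) :
    ∀ z ∈ p.support, z ∈ s := by
  induction p with
  | nil => simpa using hps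
  | @cons x x' y hadj p ih =>
    simp only [Walk.support_cons, List.mem_cons, forall_eq_or_imp, exists_eq_or_imp] at hpt hps ⊢
    have hx' := p.start_mem_support
    have hp : ∀ z ∈ p.support, z ∈ s :=
      ih hpt.2 (hps.elim (fun hx ↦ ⟨x', hx', hst _ _ hadj hx (hpt.2 _ hx')⟩) id)
    exact ⟨hst _ _ hadj.symm (hp _ hx') hpt.1, hp⟩

end SimpleGraph

section FVS

variable {V : Type*} [Fintype V] {G : SimpleGraph V}

theorem isFVS_iff {X : Finset V} :
    IsFVS G X ↔ ∀ x (c : G.Walk x x), c.IsCycle → ∃ y ∈ c.support, y ∈ X := by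
  simp [IsFVS, isAcyclic_induce_iff]

theorem isFVS_univ : IsFVS G univ :=
  fun x ↦ absurd x.2 (by simp)

theorem exists_isFVS_forall_card_le (G : SimpleGraph V) :
    ∃ X : Finset V, IsFVS G X ∧ ∀ Y : Finset V, IsFVS G Y → X.card ≤ Y.card := by
  classical
  obtain ⟨X, hX, hmin⟩ := ({Y | IsFVS G Y} : Finset (Finset V)).exists_min_image card
    ⟨univ, mem_filter.mpr ⟨mem_univ _, isFVS_univ⟩⟩
  exact ⟨X, (mem_filter.mp hX).2, fun Y hY ↦ hmin Y (mem_filter.mpr ⟨mem_univ _, hY⟩)⟩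

theorem IsFVS.mem_or_mem_or_mem_of_adj {X : Finset V} (hX : IsFVS G X) {a b c : V}
    (hab : G.Adj a b) (hac : G.Adj a c) (hbc : G.Adj b c) : a ∈ X ∨ b ∈ X ∨ c ∈ X := by
  classical
  by_contra! h
  obtain ⟨ha, hb, hc⟩ := h
  exact IsAcyclic.cliqueFree hX le_rfl {⟨a, by simpa⟩, ⟨b, by simpa⟩, ⟨c, by simpa⟩}
    (is3Clique_triple_iff.mpr ⟨induce_adj.2 hab, induce_adj.2 hac, induce_adj.2 hbc⟩)

theorem IsFVS.of_isAcyclic_induce {X Y : Finset V} {P : Set V} (hY : IsFVS G Y)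
    (hP : (G.induce P).IsAcyclic) (hbdry : ∀ a ∈ P, ∀ b ∉ P, G.Adj a b → b ∈ X)
    (hYX : ∀ y ∈ Y, y ∉ P → y ∈ X) : IsFVS G X := by
  rw [isFVS_iff] at hY ⊢
  intro x c hc
  by_contra! hcX
  by_cases hcP : ∃ z ∈ c.support, z ∈ P
  · have hcP' := c.forall_mem_support_of_adj_closed (t := {z | z ∉ X})
      (fun a b hab ha hb ↦ by_contra fun hbP ↦ hb (hbdry a ha b hbP hab)) hcX hcP
    obtain ⟨y, hy, hyP⟩ := isAcyclic_induce_iff.mp hP x c hc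
    exact hyP (hcP' y hy)
  · push Not at hcP
    obtain ⟨y, hy, hyY⟩ := hY x c hc
    exact hcX y hy (hYX y hyY (hcP y hy))

variable [DecidableEq V]

theorem IsFVS.card_sdiff_le_two {X K : Finset V} (hX : IsFVS G X) (hK : G.IsClique (K : Set V)) :
    (K \ X).card ≤ 2 := by
  by_contra! h
  obtain ⟨a, ha, b, hb, c, hc, hab, hac, hbc⟩ := two_lt_card.mp h
  simp only [mem_sdiff] at ha hb hc
  rcases hX.mem_or_mem_or_mem_of_adj (hK ha.1 hb.1 hab) (hK ha.1 hc.1 hac) (hK hb.1 hc.1 hbc)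
    with h | h | h
  exacts [ha.2 h, hb.2 h, hc.2 h]

theorem IsFVS.exists_superset_card_le {Y K P : Finset V} (hY : IsFVS G Y)
    (hK : G.IsClique (K : Set V)) (hP : (G.induce (P : Set V)).IsAcyclic) (hKP : Disjoint K P)
    (hbdry : ∀ a ∈ P, ∀ b ∉ P, G.Adj a b → b ∈ K) (hYP : 2 ≤ (Y ∩ P).card) :
    ∃ X, K ⊆ X ∧ IsFVS G X ∧ X.card ≤ Y.card := by
  have hKX : K ⊆ Y \ P ∪ K \ Y := fun k hk ↦ by
    by_cases hkY : k ∈ Y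
    · exact mem_union_left _ (mem_sdiff.mpr ⟨hkY, disjoint_left.mp hKP hk⟩)
    · exact mem_union_right _ (mem_sdiff.mpr ⟨hk, hkY⟩)
  refine ⟨_, hKX, hY.of_isAcyclic_induce hP (fun a ha b hb hab ↦ hKX (hbdry a ha b hb hab))
    (fun y hy hyP ↦ mem_union_left _ (mem_sdiff.mpr ⟨hy, hyP⟩)), ?_⟩
  calc (Y \ P ∪ K \ Y).card ≤ (Y \ P).card + (K \ Y).card := card_union_le _ _
    _ ≤ (Y \ P).card + (Y ∩ P).card := by grw [hY.card_sdiff_le_two hK, hYP]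
    _ = Y.card := card_sdiff_add_card_inter Y P

theorem IsFVS.two_le_card_inter {Y P : Finset V} (hY : IsFVS G Y) {w a b c d : V} (hw : w ∉ Y)
    (hwP : ∀ x ∈ P, G.Adj w x) (ha : a ∈ P) (hb : b ∈ P) (hc : c ∈ P) (hd : d ∈ P)
    (hab : G.Adj a b) (hcd : G.Adj c d) (hac : a ≠ c) (had : a ≠ d) (hbc : b ≠ c) (hbd : b ≠ d) :
    2 ≤ (Y ∩ P).card := by
  have hedge : ∀ {x y}, x ∈ P → y ∈ P → G.Adj x y → ∃ z ∈ Y ∩ P, z = x ∨ z = y :=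
    fun hx hy hxy ↦ by
      rcases hY.mem_or_mem_or_mem_of_adj (hwP _ hx) (hwP _ hy) hxy with h | h | h
      · exact absurd h hw
      · exact ⟨_, mem_inter.mpr ⟨h, hx⟩, .inl rfl⟩
      · exact ⟨_, mem_inter.mpr ⟨h, hy⟩, .inr rfl⟩
  obtain ⟨z₁, hz₁, rfl | rfl⟩ := hedge ha hb hab <;>
  obtain ⟨z₂, hz₂, rfl | rfl⟩ := hedge hc hd hcd <;>
  exact one_lt_card.mpr ⟨_, hz₁, _, hz₂, ‹_›⟩

theorem IsFVS.exists_mem_card_le {Y K P : Finset V}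
    (hY : IsFVS G Y) (hK : G.IsClique (K : Set V)) (hP : (G.induce (P : Set V)).IsAcyclic)
    (hKP : Disjoint K P) (hbdry : ∀ a ∈ P, ∀ b ∉ P, G.Adj a b → b ∈ K) {w a b c d : V}
    (hw : w ∈ K) (hwP : ∀ x ∈ P, G.Adj w x) (ha : a ∈ P) (hb : b ∈ P) (hc : c ∈ P) (hd : d ∈ P)
    (hab : G.Adj a b) (hcd : G.Adj c d) (hac : a ≠ c) (had : a ≠ d) (hbc : b ≠ c) (hbd : b ≠ d) :
    ∃ X, w ∈ X ∧ IsFVS G X ∧ X.card ≤ Y.card := by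
  by_cases hwY : w ∈ Y
  · exact ⟨Y, hwY, hY, le_rfl⟩
  obtain ⟨X, hKX, hX, hXY⟩ := hY.exists_superset_card_le hK hP hKP hbdry
    (hY.two_le_card_inter hwY hwP ha hb hc hd hab hcd hac had hbc hbd)
  exact ⟨X, hKX hw, hX, hXY⟩

end FVS

section DelVert

variable {V : Type*} [Fintype V] [DecidableEq V] {G : SimpleGraph V} {v : V}

theorem isFVS_delVert_iff {X : Finset {x // x ≠ v}} :
    IsFVS (delVert G v) X ↔ IsFVS G (insert v (X.map (Function.Embedding.subtype _))) := by
  refine Iso.isAcyclic_iff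
    { toFun := fun ⟨⟨x, hxv⟩, hxX⟩ ↦ ⟨x, by simpa [hxv] using hxX⟩
      invFun := fun ⟨x, hxX⟩ ↦
        have hxv : x ≠ v := fun h ↦ hxX (by simp [h])
        ⟨⟨x, hxv⟩, by simpa [hxv] using hxX⟩
      left_inv := fun _ ↦ rfl
      right_inv := fun _ ↦ rfl
      map_rel_iff' := Iff.rfl }

theorem hasFVS_delVert_iff {k : ℕ} (hk : 1 ≤ k) :
    HasFVS (delVert G v) (k - 1) ↔ ∃ X : Finset V, v ∈ X ∧ X.card ≤ k ∧ IsFVS G X := by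
  constructor
  · rintro ⟨X, hXk, hX⟩
    refine ⟨_, mem_insert_self _ _, ?_, isFVS_delVert_iff.mp hX⟩
    grw [card_insert_le, card_map]
    omega
  · rintro ⟨X, hvX, hXk, hX⟩
    refine ⟨X.subtype (· ≠ v), ?_, isFVS_delVert_iff.mpr ?_⟩
    · rw [card_subtype, filter_ne', card_erase_of_mem hvX]
      omega
    · rwa [subtype_map, filter_ne', insert_erase hvX]

end DelVert

theorem fvs_rule_R7_general {V : Type*} [Fintype V] [DecidableEq V]
    (G : SimpleGraph V) (k q : ℕ) (hk : 1 ≤ k) (hq : 0 < q)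
    (v : Fin q → V)
    (hK : G.IsClique (Set.range v))
    (u : Fin 7 → V) (huinj : Function.Injective u)
    (huK : ∀ i, u i ∉ Set.range v)
    (hpath : ∀ i : Fin 6, G.Adj (u i.castSucc) (u i.succ))
    (hdeg2 : ∀ i : Fin 7, ∀ x : V,
      (G.Adj (u i) x ∧ x ∉ Set.range v) ↔
        (∃ j : Fin 7, x = u j ∧ ((j : ℕ) = (i : ℕ) + 1 ∨ (i : ℕ) = (j : ℕ) + 1)))
    (hmono : ∀ i : Fin 7, ∃ qi : ℕ, 1 ≤ qi ∧ qi ≤ q ∧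
      ∀ j : Fin q, (G.Adj (u i) (v j) ↔ (j : ℕ) < qi)) :
    (HasFVS G k ↔ HasFVS (delVert G (v ⟨0, hq⟩)) (k - 1)) ∧
    ∃ X : Finset V, v ⟨0, hq⟩ ∈ X ∧ IsFVS G X ∧
      ∀ Y : Finset V, IsFVS G Y → X.card ≤ Y.card := by
  set v₀ := v ⟨0, hq⟩
  have hv₀ : ∀ i, G.Adj v₀ (u i) := fun i ↦ by
    obtain ⟨qi, hqi, -, hadj⟩ := hmono i
    exact ((hadj ⟨0, hq⟩).mpr hqi).symm
  have hbdry : ∀ a ∈ univ.image u, ∀ b ∉ univ.image u, G.Adj a b → b ∈ univ.image v := by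
    simp only [mem_image_univ_iff_mem_range, Set.forall_mem_range]
    refine fun i b hb hadj ↦ by_contra fun hbK ↦ ?_
    obtain ⟨j, rfl, -⟩ := (hdeg2 i b).mp ⟨hadj, hbK⟩
    exact hb ⟨j, rfl⟩
  have hP : (G.induce (univ.image u : Set V)).IsAcyclic := by
    rw [Fintype.coe_image_univ]
    refine isAcyclic_induce_range_of_adj_consecutive huinj fun i j hij ↦ ?_
    obtain ⟨j', hj, hij'⟩ := (hdeg2 i (u j)).mp ⟨hij, huK j⟩
    rwa [huinj hj]
  have hKP : Disjoint (univ.image v) (univ.image u) := disjoint_left.mpr fun x hx hx' ↦ by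
    obtain ⟨i, -, rfl⟩ := mem_image.mp hx'
    exact huK i (by simpa using hx)
  have hu (i) : u i ∈ univ.image u := mem_image_of_mem _ (mem_univ i)
  have hreplace : ∀ Y, IsFVS G Y → ∃ X, v₀ ∈ X ∧ IsFVS G X ∧ X.card ≤ Y.card := fun Y hY ↦
    hY.exists_mem_card_le (by rwa [Fintype.coe_image_univ]) hP hKP hbdry
      (mem_image_of_mem _ (mem_univ _)) (by simpa using hv₀) (hu 0) (hu 1) (hu 2) (hu 3)
      (hpath 0) (hpath 2)
      (huinj.ne (by decide)) (huinj.ne (by decide)) (huinj.ne (by decide)) (huinj.ne (by decide))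
  refine ⟨?_, ?_⟩
  · rw [hasFVS_delVert_iff hk]
    constructor
    · rintro ⟨Y, hYk, hY⟩
      obtain ⟨X, hv₀X, hX, hXY⟩ := hreplace Y hY
      exact ⟨X, hv₀X, hXY.trans hYk, hX⟩
    · rintro ⟨X, -, hXk, hX⟩
      exact ⟨X, hXk, hX⟩
  · obtain ⟨Y, hY, hmin⟩ := exists_isFVS_forall_card_le G
    obtain ⟨X, hv₀X, hX, hXY⟩ := hreplace Y hY
    exact ⟨X, hv₀X, hX, fun Z hZ ↦ hXY.trans (hmin Z hZ)⟩

/-- Safeness of rule (R7): given a clique `K = {v 0, …, v (q-1)}` and a path on seven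
vertices `u 0, …, u 6` outside `K`, each of degree two in `G - K` and whose
neighborhood in `K` is a non-empty prefix of `(v 0, …, v (q-1))`, the vertex `v 0`
can be forced into the solution. -/
theorem fvs_rule_R7 {V : Type*} [Fintype V] [DecidableEq V]
    (G : SimpleGraph V) (k q : ℕ) (hk : 1 ≤ k) (hq : 0 < q)
    (v : Fin q → V) (hvinj : Function.Injective v)
    (hK : G.IsClique (Set.range v))
    (u : Fin 7 → V) (huinj : Function.Injective u)
    (huK : ∀ i, u i ∉ Set.range v)
    (hpath : ∀ i : Fin 6, G.Adj (u i.castSucc) (u i.succ))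
    (hdeg2 : ∀ i : Fin 7, ∀ x : V,
      (G.Adj (u i) x ∧ x ∉ Set.range v) ↔
        (∃ j : Fin 7, x = u j ∧ ((j : ℕ) = (i : ℕ) + 1 ∨ (i : ℕ) = (j : ℕ) + 1)))
    (hmono : ∀ i : Fin 7, ∃ qi : ℕ, 1 ≤ qi ∧ qi ≤ q ∧
      ∀ j : Fin q, (G.Adj (u i) (v j) ↔ (j : ℕ) < qi)) :
    (HasFVS G k ↔ HasFVS (delVert G (v ⟨0, hq⟩)) (k - 1)) ∧
    ∃ X : Finset V, v ⟨0, hq⟩ ∈ X ∧ IsFVS G X ∧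
      ∀ Y : Finset V, IsFVS G Y → X.card ≤ Y.card :=
  fvs_rule_R7_general G k q hk hq v hK u huinj huK hpath hdeg2 hmono
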